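/- Let Y ↔ X ↔ Z be a Markov chain with Z = (Z₁,Z̃). If both Z̃ ↔ Z₁ ↔ Y (compactness: I(Y;Z̃|Z₁)=0) and X ↔ Z ↔ Y (explicitness: I(Y;X|Z)=0) hold, then X ↔ Z₁ ↔ Y holds (sufficiency: I(Y;X|Z₁)=0). -/

import Mathlib

open BigOperators Real

variable {Ω : Type*} [Fintype Ω]

/-- `p` is a probability mass function on the finite sample space `Ω`. -/
def IsPMF {Ω : Type*} [Fintype Ω] (p : Ω → ℝ) : Prop :=
  (∀ ω, 0 ≤ p ω) ∧ ∑ ω, p ω = 1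

/-- The probability that the random variable `A` takes the value `a`. -/
noncomputable def prob {Ω : Type*} [Fintype Ω] (p : Ω → ℝ) {α : Type*} [DecidableEq α]
    (A : Ω → α) (a : α) : ℝ :=
  ∑ ω ∈ Finset.univ.filter (fun ω => A ω = a), p ω

/-- The Shannon entropy `H(A)` of the random variable `A`. -/
noncomputable def entropy {Ω : Type*} [Fintype Ω] (p : Ω → ℝ) {α : Type*} [DecidableEq α]
    (A : Ω → α) : ℝ :=
  -∑ a ∈ Finset.univ.image A, prob p A a * Real.log (prob p A a)

/-- The mutual information `I(A;B)`. -/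
noncomputable def mutualInfo {Ω : Type*} [Fintype Ω] (p : Ω → ℝ) {α β : Type*}
    [DecidableEq α] [DecidableEq β] (A : Ω → α) (B : Ω → β) : ℝ :=
  entropy p A + entropy p B - entropy p (fun ω => (A ω, B ω))

/-- The conditional mutual information `I(A;B∣C)`. -/
noncomputable def condMutualInfo {Ω : Type*} [Fintype Ω] (p : Ω → ℝ) {α β γ : Type*}
    [DecidableEq α] [DecidableEq β] [DecidableEq γ]
    (A : Ω → α) (B : Ω → β) (C : Ω → γ) : ℝ :=
  entropy p (fun ω => (A ω, C ω)) + entropy p (fun ω => (B ω, C ω))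
    - entropy p (fun ω => (A ω, B ω, C ω)) - entropy p C

/-- The conditional entropy `H(A∣C)`. -/
noncomputable def condEntropy {Ω : Type*} [Fintype Ω] (p : Ω → ℝ) {α γ : Type*}
    [DecidableEq α] [DecidableEq γ] (A : Ω → α) (C : Ω → γ) : ℝ :=
  entropy p (fun ω => (A ω, C ω)) - entropy p C

section Aux

variable {Ω : Type*} [Fintype Ω] {α β γ : Type*} [DecidableEq α] [DecidableEq β] [DecidableEq γ]

lemma entropy_eq_sum (p : Ω → ℝ) (A : Ω → α) :
    entropy p A = -∑ ω, p ω * Real.log (prob p A (A ω)) := by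
  unfold entropy
  congr 1
  rw [← Finset.sum_fiberwise_of_maps_to
      (fun ω _ => Finset.mem_image_of_mem A (Finset.mem_univ ω))
      (fun ω => p ω * Real.log (prob p A (A ω)))]
  refine Finset.sum_congr rfl fun a _ => ?_
  rw [prob, Finset.sum_mul]
  refine Finset.sum_congr rfl fun ω hω => ?_
  rw [(Finset.mem_filter.mp hω).2]
  rfl

lemma prob_nonneg (p : Ω → ℝ) (hp0 : ∀ ω, 0 ≤ p ω) (A : Ω → α) (a : α) :
    0 ≤ prob p A a :=
  Finset.sum_nonneg fun ω _ => hp0 ω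

lemma le_prob (p : Ω → ℝ) (hp0 : ∀ ω, 0 ≤ p ω) (A : Ω → α) (ω : Ω) :
    p ω ≤ prob p A (A ω) :=
  Finset.single_le_sum (fun i _ => hp0 i) (by simp)

lemma prob_mono (p : Ω → ℝ) (hp0 : ∀ ω, 0 ≤ p ω) {A : Ω → α} {B : Ω → β} (ω : Ω)
    (h : ∀ ω', A ω' = A ω → B ω' = B ω) :
    prob p A (A ω) ≤ prob p B (B ω) := by
  apply Finset.sum_le_sum_of_subset_of_nonneg
  · intro x hx
    simp only [Finset.mem_filter, Finset.mem_univ, true_and] at *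
    exact h x hx
  · intros
    exact hp0 _

lemma sum_prob (p : Ω → ℝ) (A : Ω → α) :
    ∑ a ∈ Finset.univ.image A, prob p A a = ∑ ω, p ω :=
  Finset.sum_fiberwise_of_maps_to (fun ω _ => Finset.mem_image_of_mem A (Finset.mem_univ ω)) p

lemma sum_prob_pair (p : Ω → ℝ) (A : Ω → α) (C : Ω → γ) (c : γ) :
    ∑ a ∈ Finset.univ.image A, prob p (fun ω => (A ω, C ω)) (a, c) = prob p C c := by
  unfold prob
  rw [← Finset.sum_fiberwise_of_maps_to
      (s := Finset.univ.filter (fun ω => C ω = c)) (t := Finset.univ.image A) (g := A)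
      (fun ω _ => Finset.mem_image_of_mem A (Finset.mem_univ ω)) p]
  refine Finset.sum_congr rfl fun a _ => ?_
  congr 1
  ext ω
  simp only [Finset.mem_filter, Finset.mem_univ, true_and, Prod.mk.injEq]
  tauto

lemma entropy_congr (p : Ω → ℝ) {A : Ω → α} {B : Ω → β}
    (h : ∀ ω₁ ω₂, A ω₁ = A ω₂ ↔ B ω₁ = B ω₂) : entropy p A = entropy p B := by
  rw [entropy_eq_sum, entropy_eq_sum]
  congr 1
  refine Finset.sum_congr rfl fun ω _ => ?_
  have : prob p A (A ω) = prob p B (B ω) := by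
    unfold prob
    congr 1
    ext ω'
    simp [h ω' ω]
  rw [this]

lemma condMutualInfo_nonneg (p : Ω → ℝ) (hp : IsPMF p)
    (A : Ω → α) (B : Ω → β) (C : Ω → γ) :
    0 ≤ condMutualInfo p A B C := by
  obtain ⟨hp0, hp1⟩ := hp
  set AC : Ω → α × γ := fun ω => (A ω, C ω) with hAC
  set BC : Ω → β × γ := fun ω => (B ω, C ω) with hBC
  set D : Ω → α × β × γ := fun ω => (A ω, B ω, C ω) with hD
  set qAC : Ω → ℝ := fun ω => prob p AC (AC ω) with hqAC
  set qBC : Ω → ℝ := fun ω => prob p BC (BC ω) with hqBC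
  set qD : Ω → ℝ := fun ω => prob p D (D ω) with hqD
  set qC : Ω → ℝ := fun ω => prob p C (C ω) with hqC
  have expand : condMutualInfo p A B C
      = ∑ ω, p ω * (Real.log (qD ω) + Real.log (qC ω)
        - Real.log (qAC ω) - Real.log (qBC ω)) := by
    unfold condMutualInfo
    rw [entropy_eq_sum p (fun ω => (A ω, C ω)), entropy_eq_sum p (fun ω => (B ω, C ω)),
      entropy_eq_sum p (fun ω => (A ω, B ω, C ω)), entropy_eq_sum p C]
    simp only [mul_add, mul_sub]
    rw [Finset.sum_sub_distrib, Finset.sum_sub_distrib, Finset.sum_add_distrib]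
    ring
  -- pointwise estimate via log x ≤ x - 1
  have key : ∀ ω : Ω, p ω * (Real.log (qAC ω) + Real.log (qBC ω)
      - Real.log (qD ω) - Real.log (qC ω))
      ≤ p ω * (qAC ω * qBC ω / (qD ω * qC ω)) - p ω := by
    intro ω
    rcases eq_or_lt_of_le (hp0 ω) with h0 | h0
    · rw [← h0]; simp
    · have hDpos : 0 < qD ω := lt_of_lt_of_le h0 (le_prob p hp0 D ω)
      have hACpos : 0 < qAC ω := lt_of_lt_of_le hDpos
        (prob_mono p hp0 ω (fun ω' h => by
          simp only [hD, Prod.mk.injEq] at h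
          simp [hAC, h.1, h.2.2]))
      have hBCpos : 0 < qBC ω := lt_of_lt_of_le hDpos
        (prob_mono p hp0 ω (fun ω' h => by
          simp only [hD, Prod.mk.injEq] at h
          simp [hBC, h.2.1, h.2.2]))
      have hCpos : 0 < qC ω := lt_of_lt_of_le hDpos
        (prob_mono p hp0 ω (fun ω' h => by
          simp only [hD, Prod.mk.injEq] at h
          simp [hqC, h.2.2]))
      have hr : 0 < qAC ω * qBC ω / (qD ω * qC ω) :=
        div_pos (mul_pos hACpos hBCpos) (mul_pos hDpos hCpos)
      have hlog : Real.log (qAC ω) + Real.log (qBC ω) - Real.log (qD ω) - Real.log (qC ω)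
          = Real.log (qAC ω * qBC ω / (qD ω * qC ω)) := by
        rw [Real.log_div (by positivity) (by positivity),
          Real.log_mul hACpos.ne' hBCpos.ne', Real.log_mul hDpos.ne' hCpos.ne']
        ring
      rw [hlog]
      have := Real.log_le_sub_one_of_pos hr
      nlinarith [h0.le]
  -- the total "ratio mass" is ≤ 1
  have hS : ∑ ω, p ω * (qAC ω * qBC ω / (qD ω * qC ω)) ≤ 1 := by
    have step1 : ∑ ω, p ω * (qAC ω * qBC ω / (qD ω * qC ω))
        = ∑ t ∈ Finset.univ.image D, ∑ ω ∈ Finset.univ.filter (fun ω => D ω = t),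
            p ω * (qAC ω * qBC ω / (qD ω * qC ω)) :=
      (Finset.sum_fiberwise_of_maps_to
        (fun ω _ => Finset.mem_image_of_mem D (Finset.mem_univ ω)) _).symm
    have step2 : ∀ t ∈ Finset.univ.image D,
        ∑ ω ∈ Finset.univ.filter (fun ω => D ω = t), p ω * (qAC ω * qBC ω / (qD ω * qC ω))
        ≤ prob p AC (t.1, t.2.2) * prob p BC (t.2.1, t.2.2) / prob p C t.2.2 := by
      intro t _
      have hconst : ∀ ω ∈ Finset.univ.filter (fun ω => D ω = t),
          p ω * (qAC ω * qBC ω / (qD ω * qC ω))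
          = p ω * (prob p AC (t.1, t.2.2) * prob p BC (t.2.1, t.2.2)
              / (prob p D t * prob p C t.2.2)) := by
        intro ω hω
        have ht : D ω = t := (Finset.mem_filter.mp hω).2
        have h1 : A ω = t.1 := by rw [← ht]
        have h2 : B ω = t.2.1 := by rw [← ht]
        have h3 : C ω = t.2.2 := by rw [← ht]
        simp only [hqAC, hqBC, hqD, hqC, hAC, hBC, hD, h1, h2, h3, ht]
      rw [Finset.sum_congr rfl hconst, ← Finset.sum_mul]
      have hfiber : ∑ ω ∈ Finset.univ.filter (fun ω => D ω = t), p ω = prob p D t := rfl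
      rw [hfiber]
      rcases eq_or_lt_of_le (prob_nonneg p hp0 D t) with h0 | h0
      · rw [← h0]
        simp only [zero_mul]
        exact div_nonneg (mul_nonneg (prob_nonneg p hp0 _ _) (prob_nonneg p hp0 _ _))
          (prob_nonneg p hp0 _ _)
      · rcases eq_or_ne (prob p C t.2.2) 0 with hY | hY
        · simp [hY]
        · refine le_of_eq ?_
          have hPD : prob p D t ≠ 0 := h0.ne'
          field_simp
    have step3 : ∑ t ∈ Finset.univ.image D,
        prob p AC (t.1, t.2.2) * prob p BC (t.2.1, t.2.2) / prob p C t.2.2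
        ≤ ∑ t ∈ (Finset.univ.image A) ×ˢ ((Finset.univ.image B) ×ˢ (Finset.univ.image C)),
            prob p AC (t.1, t.2.2) * prob p BC (t.2.1, t.2.2) / prob p C t.2.2 := by
      apply Finset.sum_le_sum_of_subset_of_nonneg
      · intro t ht
        obtain ⟨ω, _, hω⟩ := Finset.mem_image.mp ht
        simp only [Finset.mem_product]
        refine ⟨?_, ?_, ?_⟩ <;> rw [← hω] <;>
          exact Finset.mem_image_of_mem _ (Finset.mem_univ ω)
      · intros
        exact div_nonneg (mul_nonneg (prob_nonneg p hp0 _ _) (prob_nonneg p hp0 _ _))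
          (prob_nonneg p hp0 _ _)
    have step4 : ∑ t ∈ (Finset.univ.image A) ×ˢ ((Finset.univ.image B) ×ˢ (Finset.univ.image C)),
        prob p AC (t.1, t.2.2) * prob p BC (t.2.1, t.2.2) / prob p C t.2.2 ≤ 1 := by
      rw [Finset.sum_product]
      simp only [Finset.sum_product]
      calc ∑ a ∈ Finset.univ.image A, ∑ b ∈ Finset.univ.image B,
            ∑ c ∈ Finset.univ.image C, prob p AC (a, c) * prob p BC (b, c) / prob p C c
          = ∑ a ∈ Finset.univ.image A, ∑ c ∈ Finset.univ.image C,
            ∑ b ∈ Finset.univ.image B, prob p AC (a, c) * prob p BC (b, c) / prob p C c :=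
            Finset.sum_congr rfl fun a _ => Finset.sum_comm
        _ = ∑ c ∈ Finset.univ.image C, ∑ a ∈ Finset.univ.image A,
            ∑ b ∈ Finset.univ.image B, prob p AC (a, c) * prob p BC (b, c) / prob p C c :=
            Finset.sum_comm
        _ = ∑ c ∈ Finset.univ.image C, ∑ a ∈ Finset.univ.image A,
            prob p AC (a, c) * prob p C c / prob p C c := by
            refine Finset.sum_congr rfl fun c _ => Finset.sum_congr rfl fun a _ => ?_
            rw [← Finset.sum_div, ← Finset.mul_sum, hBC, sum_prob_pair p B C c]
        _ = ∑ c ∈ Finset.univ.image C, prob p C c * prob p C c / prob p C c := by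
            refine Finset.sum_congr rfl fun c _ => ?_
            rw [← Finset.sum_div, ← Finset.sum_mul, hAC, sum_prob_pair p A C c]
        _ ≤ ∑ c ∈ Finset.univ.image C, prob p C c := by
            refine Finset.sum_le_sum fun c _ => ?_
            rcases eq_or_ne (prob p C c) 0 with h | h
            · simp [h]
            · rw [mul_div_assoc, div_self h, mul_one]
        _ = 1 := by rw [sum_prob, hp1]
    calc ∑ ω, p ω * (qAC ω * qBC ω / (qD ω * qC ω))
        = _ := step1
      _ ≤ _ := Finset.sum_le_sum step2
      _ ≤ _ := step3
      _ ≤ 1 := step4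
  have hsum : ∑ ω, (p ω * (qAC ω * qBC ω / (qD ω * qC ω)) - p ω)
      = (∑ ω, p ω * (qAC ω * qBC ω / (qD ω * qC ω))) - 1 := by
    rw [Finset.sum_sub_distrib, hp1]
  have hneg : -condMutualInfo p A B C ≤ 0 := by
    rw [expand, ← Finset.sum_neg_distrib]
    calc ∑ ω, -(p ω * (Real.log (qD ω) + Real.log (qC ω)
          - Real.log (qAC ω) - Real.log (qBC ω)))
        = ∑ ω, p ω * (Real.log (qAC ω) + Real.log (qBC ω)
          - Real.log (qD ω) - Real.log (qC ω)) := by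
          refine Finset.sum_congr rfl fun ω _ => by ring
      _ ≤ ∑ ω, (p ω * (qAC ω * qBC ω / (qD ω * qC ω)) - p ω) :=
          Finset.sum_le_sum fun ω _ => key ω
      _ = (∑ ω, p ω * (qAC ω * qBC ω / (qD ω * qC ω))) - 1 := hsum
      _ ≤ 0 := by linarith
  linarith

end Aux

/-- Compactness (`Z̃ ↔ Z₁ ↔ Y`) together with explicitness (`X ↔ (Z₁,Z̃) ↔ Y`)
implies sufficiency (`X ↔ Z₁ ↔ Y`). -/
theorem stmt_5 {Ω α β γ δ : Type*} [Fintype Ω]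
    [DecidableEq α] [DecidableEq β] [DecidableEq γ] [DecidableEq δ]
    (p : Ω → ℝ) (hp : IsPMF p) (X : Ω → α) (Y : Ω → β) (Z₁ : Ω → γ) (Zt : Ω → δ)
    (hRep : condMutualInfo p Y (fun ω => (Z₁ ω, Zt ω)) X = 0)
    (hCompact : condMutualInfo p Y Zt Z₁ = 0)
    (hExpl : condMutualInfo p Y X (fun ω => (Z₁ ω, Zt ω)) = 0) :
    condMutualInfo p Y X Z₁ = 0 := by
  have h1 : condMutualInfo p Y (fun ω => (X ω, Zt ω)) Z₁
      = condMutualInfo p Y Zt Z₁ + condMutualInfo p Y X (fun ω => (Z₁ ω, Zt ω)) := by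
    unfold condMutualInfo
    have eA1 : entropy p (fun ω => ((X ω, Zt ω), Z₁ ω))
        = entropy p (fun ω => (X ω, (Z₁ ω, Zt ω))) :=
      entropy_congr p (fun ω₁ ω₂ => by simp only [Prod.mk.injEq] <;> tauto)
    have eA2 : entropy p (fun ω => (Y ω, (X ω, Zt ω), Z₁ ω))
        = entropy p (fun ω => (Y ω, X ω, (Z₁ ω, Zt ω))) :=
      entropy_congr p (fun ω₁ ω₂ => by simp only [Prod.mk.injEq] <;> tauto)
    have eA3 : entropy p (fun ω => (Y ω, Zt ω, Z₁ ω))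
        = entropy p (fun ω => (Y ω, (Z₁ ω, Zt ω))) :=
      entropy_congr p (fun ω₁ ω₂ => by simp only [Prod.mk.injEq] <;> tauto)
    have eA4 : entropy p (fun ω => (Zt ω, Z₁ ω))
        = entropy p (fun ω => (Z₁ ω, Zt ω)) :=
      entropy_congr p (fun ω₁ ω₂ => by simp only [Prod.mk.injEq] <;> tauto)
    rw [eA1, eA2, eA3, eA4]
    ring
  have h2 : condMutualInfo p Y (fun ω => (X ω, Zt ω)) Z₁
      = condMutualInfo p Y X Z₁ + condMutualInfo p Y Zt (fun ω => (X ω, Z₁ ω)) := by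
    unfold condMutualInfo
    have eB1 : entropy p (fun ω => ((X ω, Zt ω), Z₁ ω))
        = entropy p (fun ω => (Zt ω, (X ω, Z₁ ω))) :=
      entropy_congr p (fun ω₁ ω₂ => by simp only [Prod.mk.injEq] <;> tauto)
    have eB2 : entropy p (fun ω => (Y ω, (X ω, Zt ω), Z₁ ω))
        = entropy p (fun ω => (Y ω, Zt ω, (X ω, Z₁ ω))) :=
      entropy_congr p (fun ω₁ ω₂ => by simp only [Prod.mk.injEq] <;> tauto)
    have eB3 : entropy p (fun ω => (Y ω, X ω, Z₁ ω))
        = entropy p (fun ω => (Y ω, (X ω, Z₁ ω))) :=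
      entropy_congr p (fun ω₁ ω₂ => by simp only [Prod.mk.injEq] <;> tauto)
    rw [eB1, eB2, eB3]
    ring
  have h0 : condMutualInfo p Y (fun ω => (X ω, Zt ω)) Z₁ = 0 := by
    rw [h1, hCompact, hExpl]; ring
  have n1 := condMutualInfo_nonneg p hp Y X Z₁
  have n2 := condMutualInfo_nonneg p hp Y Zt (fun ω => (X ω, Z₁ ω))
  linarith [h0, h2]
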